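/- If the Lonely Runner Conjecture fails for some rational velocity vector P ∈ ℚ^n in the strong sense that sup_{t>0} min_i ‖t·p_i‖ < 1/(n+1), then on any segment from P to a ℚ-linearly independent vector A there exists a vector B with sup_{t∈[0,T_1]} min_i ‖t·b_i‖ = 1/(n+1), where T_1 is a time witnessing min_i ‖T_1·a_i‖ > 1/(n+1) for A. -/

import Mathlib

/-! The distance to the nearest integer is the norm of `ℝ/ℤ`, so `‖t vᵢ‖` is jointly continuous
in `(v, t)` and by compactness of `[0, T₁]` the function
`F(v) = sup_{t ∈ [0, T₁]} min_i ‖t vᵢ‖` is continuous along the segment from `P` to `A`.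
At `P` it is at most the full supremum over `t > 0`, which is `< 1/(n+1)`; at `A` it is at least
the value at `t = T₁`, which is `> 1/(n+1)`. The intermediate value theorem finishes. -/

/-- Distance from a real number to the nearest integer. -/
noncomputable def distNearestInt (x : ℝ) : ℝ := |x - round x|

lemma distNearestInt_eq_norm (x : ℝ) : distNearestInt x = ‖(x : UnitAddCircle)‖ :=
  UnitAddCircle.norm_eq.symm

@[fun_prop]
lemma continuous_distNearestInt : Continuous distNearestInt := by
  simp_rw [funext distNearestInt_eq_norm]
  fun_prop

lemma distNearestInt_nonneg (x : ℝ) : 0 ≤ distNearestInt x := abs_nonneg _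

lemma distNearestInt_le_half (x : ℝ) : distNearestInt x ≤ 1 / 2 := abs_sub_round x

lemma distNearestInt_zero : distNearestInt 0 = 0 := by simp [distNearestInt]

lemma Real.continuous_iInf_of_finite {X ι : Type*} [TopologicalSpace X] [Finite ι]
    {g : ι → X → ℝ} (hg : ∀ i, Continuous (g i)) : Continuous fun x => ⨅ i, g i x := by
  rcases isEmpty_or_nonempty ι with _ | _
  · simpa only [Real.iInf_of_isEmpty] using continuous_const
  · have := Fintype.ofFinite ι
    simp_rw [← Finset.inf'_univ_eq_ciInf]
    exact Continuous.finset_inf'_apply Finset.univ_nonempty fun i _ => hg i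

section

variable {ι : Type*} [Finite ι]

lemma iInf_distNearestInt_le_half (x : ι → ℝ) : ⨅ i, distNearestInt (x i) ≤ 1 / 2 := by
  rcases isEmpty_or_nonempty ι with _ | ⟨⟨i⟩⟩
  · rw [Real.iInf_of_isEmpty]; norm_num
  · exact ciInf_le_of_le (Set.finite_range _).bddBelow i (distNearestInt_le_half _)

lemma bddAbove_range_iInf_distNearestInt {α : Type*} (x : α → ι → ℝ) :
    BddAbove (Set.range fun a => ⨅ i, distNearestInt (x a i)) :=
  ⟨1 / 2, by rintro _ ⟨a, rfl⟩; exact iInf_distNearestInt_le_half _⟩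

lemma continuous_iSup_Icc_iInf_distNearestInt {v : ℝ → ι → ℝ} (hv : Continuous v) (T : ℝ) :
    Continuous fun s => ⨆ t : Set.Icc (0 : ℝ) T, ⨅ i, distNearestInt (t * v s i) := by
  refine (isCompact_Icc.continuous_sSup (f := fun s t => ⨅ i, distNearestInt (t * v s i))
    ?_).congr fun s => sSup_image'
  exact Real.continuous_iInf_of_finite fun i => by fun_prop

lemma iSup_Icc_iInf_distNearestInt_le_iSup_pos (x : ι → ℝ) (T : ℝ) :
    ⨆ t : Set.Icc (0 : ℝ) T, ⨅ i, distNearestInt (t * x i) ≤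
      ⨆ t : {t : ℝ // 0 < t}, ⨅ i, distNearestInt (t * x i) := by
  have hnonneg := Real.iSup_nonneg fun t : {t : ℝ // 0 < t} =>
    Real.iInf_nonneg fun i => distNearestInt_nonneg (t * x i)
  refine Real.iSup_le (fun ⟨t, ht₀, _⟩ => ?_) hnonneg
  rcases ht₀.eq_or_lt with rfl | ht
  · simpa only [zero_mul, distNearestInt_zero, Real.iInf_const_zero] using hnonneg
  · exact le_ciSup (bddAbove_range_iInf_distNearestInt fun (t : {t : ℝ // 0 < t}) i => t * x i)
      ⟨t, ht⟩

lemma iInf_distNearestInt_le_iSup_Icc (x : ι → ℝ) {T : ℝ} (hT : 0 ≤ T) :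
    ⨅ i, distNearestInt (T * x i) ≤ ⨆ t : Set.Icc (0 : ℝ) T, ⨅ i, distNearestInt (t * x i) :=
  le_ciSup (bddAbove_range_iInf_distNearestInt fun (t : Set.Icc (0 : ℝ) T) i => t * x i)
    ⟨T, hT, le_rfl⟩

end

theorem exact_point_on_segment_general (n : ℕ) (P : Fin n → ℚ)
    (hfail : (⨆ t : {t : ℝ // 0 < t}, ⨅ i, distNearestInt (↑t * (P i : ℝ)))
        < 1 / (n + 1))
    (A : Fin n → ℝ)
    (T₁ : ℝ) (hT₁ : 0 < T₁)
    (hwit : (1 : ℝ) / (n + 1) < ⨅ i, distNearestInt (T₁ * A i)) :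
    ∃ s ∈ Set.Icc (0 : ℝ) 1,
      (⨆ t : Set.Icc (0 : ℝ) T₁,
        ⨅ i, distNearestInt (↑t * ((1 - s) • (fun i => (P i : ℝ)) + s • A) i))
        = 1 / (n + 1) := by
  set v : ℝ → Fin n → ℝ := fun s => (1 - s) • (fun i => (P i : ℝ)) + s • A
  have hv : Continuous v := by fun_prop
  have hv₀ : v 0 = fun i => (P i : ℝ) := by simp [v]
  have hv₁ : v 1 = A := by simp [v]
  have hmem : (1 : ℝ) / (n + 1) ∈ Set.Icc
      (⨆ t : Set.Icc (0 : ℝ) T₁, ⨅ i, distNearestInt (t * v 0 i))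
      (⨆ t : Set.Icc (0 : ℝ) T₁, ⨅ i, distNearestInt (t * v 1 i)) := by
    rw [hv₀, hv₁]
    exact ⟨(iSup_Icc_iInf_distNearestInt_le_iSup_pos _ T₁).trans hfail.le,
      hwit.le.trans (iInf_distNearestInt_le_iSup_Icc A hT₁.le)⟩
  exact intermediate_value_Icc zero_le_one
    (continuous_iSup_Icc_iInf_distNearestInt hv T₁).continuousOn hmem

theorem exact_point_on_segment (n : ℕ) (hn : 0 < n) (P : Fin n → ℚ)
    (hfail : (⨆ t : {t : ℝ // 0 < t}, ⨅ i, distNearestInt (↑t * (P i : ℝ)))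
        < 1 / (n + 1))
    (A : Fin n → ℝ) (hA : LinearIndependent ℚ A)
    (T₁ : ℝ) (hT₁ : 0 < T₁)
    (hwit : (1 : ℝ) / (n + 1) < ⨅ i, distNearestInt (T₁ * A i)) :
    ∃ s ∈ Set.Icc (0 : ℝ) 1,
      (⨆ t : Set.Icc (0 : ℝ) T₁,
        ⨅ i, distNearestInt (↑t * ((1 - s) • (fun i => (P i : ℝ)) + s • A) i))
        = 1 / (n + 1) :=
  exact_point_on_segment_general n P hfail A T₁ hT₁ hwit
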